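/- arXiv:math/0110286 — 6 statements merged into one kernel-verified Lean document; each statement's English description precedes it below -/
import Mathlib

section
/- For coprime positive integers p, q > 1, the number of nonnegative integers not lying in the additive semigroup generated by p and q equals (1/2)(p-1)(q-1). -/
open Finset

private lemma stmt_3_aux_rep_iff (p q k : ℕ) :
    (∃ m n : ℕ, k = m * p + n * q) ↔ k ∈ AddSubmonoid.closure ({p, q} : Set ℕ) := by
  rw [AddSubmonoid.mem_closure_pair]
  constructor
  · rintro ⟨m, n, rfl⟩; exact ⟨m, n, by simp [smul_eq_mul, mul_comm]⟩
  · rintro ⟨m, n, hk⟩; exact ⟨m, n, by simp only [smul_eq_mul] at hk; omega⟩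

private lemma stmt_3_aux_sym (p q : ℕ) (hp : 1 < p) (hq : 1 < q) (h : Nat.Coprime p q)
    (k : ℕ) (hk : ¬ ∃ m n : ℕ, k = m * p + n * q) (hkF : k ≤ p * q - p - q) :
    ∃ m n : ℕ, p * q - p - q - k = m * p + n * q := by
  haveI : NeZero p := ⟨by omega⟩
  have hqu : IsUnit (q : ZMod p) := by
    rw [ZMod.isUnit_iff_coprime]; exact h.symm
  set n : ℕ := ((k : ZMod p) * ↑hqu.unit⁻¹).val with hn
  have hnp : n < p := ZMod.val_lt _
  have hcong : ((n * q : ℕ) : ZMod p) = (k : ZMod p) := by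
    push_cast [hn]
    rw [ZMod.natCast_val, ZMod.cast_id]
    calc (k : ZMod p) * ↑hqu.unit⁻¹ * q = (k : ZMod p) * (↑hqu.unit⁻¹ * ↑hqu.unit) := by
          rw [IsUnit.unit_spec]; ring
      _ = k := by rw [Units.inv_mul, mul_one]
  have hdvd : (p : ℤ) ∣ (n * q - k : ℤ) := by
    have : ((n * q - k : ℤ) : ZMod p) = 0 := by push_cast; push_cast at hcong; rw [hcong]; ring
    exact (ZMod.intCast_zmod_eq_zero_iff_dvd _ _).mp this
  obtain ⟨m, hm⟩ := hdvd
  have hkz : (k : ℤ) = (-m) * p + n * q := by linear_combination -hm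
  have hmneg : 0 < m := by
    by_contra hm0
    push_neg at hm0
    apply hk
    refine ⟨(-m).toNat, n, ?_⟩
    have : ((-m).toNat : ℤ) = -m := Int.toNat_of_nonneg (by omega)
    zify
    rw [this]; linear_combination hkz
  have hpq : p + q ≤ p * q := add_le_mul hp hq
  refine ⟨(m - 1).toNat, p - 1 - n, ?_⟩
  have h1 : ((m - 1).toNat : ℤ) = m - 1 := Int.toNat_of_nonneg (by omega)
  have h2 : ((p - 1 - n : ℕ) : ℤ) = (p : ℤ) - 1 - n := by omega
  have h3 : ((p * q - p - q - k : ℕ) : ℤ) = (p : ℤ) * q - p - q - k := by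
    have : ((p * q - p - q : ℕ) : ℤ) = (p:ℤ)*q - p - q := by omega
    omega
  zify
  rw [h3, h1, h2, hkz]
  ring

theorem stmt_3 (p q : ℕ) (hp : 1 < p) (hq : 1 < q) (h : Nat.Coprime p q) :
    {a : ℕ | ¬ ∃ m n : ℕ, a = m * p + n * q}.ncard = (p - 1) * (q - 1) / 2 := by
  classical
  set F := p * q - p - q with hF
  have hpq : p + q ≤ p * q := add_le_mul hp hq
  have hFsucc : F + 1 = (p - 1) * (q - 1) := by
    have h2 : (p - 1) * (q - 1) = p * q - p - q + 1 := by
      cases' p with p; · omega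
      cases' q with q; · omega
      have : (p+1) * (q+1) = p*q + p + q + 1 := by ring
      simp only [Nat.succ_sub_one, this]
      omega
    omega
  have hFnotrep : ¬ ∃ m n : ℕ, F = m * p + n * q := by
    rw [stmt_3_aux_rep_iff]
    exact (frobeniusNumber_pair h hp hq).1
  have hFmax : ∀ k : ℕ, (¬ ∃ m n : ℕ, k = m * p + n * q) → k ≤ F := by
    intro k hk
    exact (frobeniusNumber_pair h hp hq).2 (by rwa [Set.mem_setOf_eq, ← stmt_3_aux_rep_iff])
  have key : ∀ k ≤ F, ((∃ m n : ℕ, k = m * p + n * q) ↔ ¬ ∃ m n : ℕ, F - k = m * p + n * q) := by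
    intro k hkF
    constructor
    · rintro ⟨m, n, hk1⟩ ⟨m', n', hk2⟩
      refine hFnotrep ⟨m + m', n + n', ?_⟩
      have h3 : F = (m * p + n * q) + (m' * p + n' * q) := by omega
      rw [h3]; ring
    · intro hnr
      by_contra hk
      exact hnr (stmt_3_aux_sym p q hp hq h k hk hkF)
  set T : Finset ℕ := (range ((p-1)*(q-1))).filter (fun k => ¬ ∃ m n : ℕ, k = m * p + n * q)
    with hT
  have hset : {a : ℕ | ¬ ∃ m n : ℕ, a = m * p + n * q} = ↑T := by
    ext a
    simp only [Set.mem_setOf_eq, hT, coe_filter, mem_range]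
    constructor
    · intro ha; exact ⟨by have := hFmax a ha; omega, ha⟩
    · intro ha; exact ha.2
  rw [hset, Set.ncard_coe_finset]
  set T' : Finset ℕ := (range ((p-1)*(q-1))).filter (fun k => ∃ m n : ℕ, k = m * p + n * q)
    with hT'
  have hcard : T.card = T'.card := by
    apply Finset.card_bij' (fun a _ => F - a) (fun b _ => F - b)
    · intro a ha
      simp only [hT, mem_filter, mem_range] at ha
      simp only [hT', mem_filter, mem_range]
      have haF : a ≤ F := hFmax a ha.2
      refine ⟨by omega, ?_⟩
      by_contra hc
      exact ha.2 ((key a haF).mpr hc)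
    · intro b hb
      simp only [hT', mem_filter, mem_range] at hb
      simp only [hT, mem_filter, mem_range]
      have hbF : b ≤ F := by omega
      exact ⟨by omega, (key b hbF).mp hb.2⟩
    · intro a ha
      simp only [hT, mem_filter, mem_range] at ha
      have := hFmax a ha.2
      omega
    · intro b hb
      simp only [hT', mem_filter, mem_range] at hb
      omega
  have hsum : T'.card + T.card = (p-1)*(q-1) := by
    rw [hT, hT']
    rw [Finset.card_filter_add_card_filter_not]
    exact Finset.card_range _
  omega
end

section
/- For coprime positive integers p, q > 1, the number of pairs (a0, a1) of nonnegative integers with a0*q + a1*p ≤ p*q, where the pair (a0,a1)=(p,0) and (a0,a1)=(0,q) give the same value p*q which is counted once, equals (1/2)(p+1)(q+1); i.e., the number of distinct values a0*q + a1*p in [0, p*q] with a0, a1 ≥ 0 and a1 < q is (1/2)(p+1)(q+1). -/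
open Finset

/-- For coprime `p q` and `0 < k < q`, `p*k/q + p*(q-k)/q = p - 1`. -/
lemma pair_div (p q k : ℕ) (hq : 0 < q) (hco : Nat.Coprime p q)
    (hk1 : 0 < k) (hk2 : k < q) : p * k / q + p * (q - k) / q = p - 1 := by
  have hr1lt : p * k % q < q := Nat.mod_lt _ hq
  have hr2lt : p * (q - k) % q < q := Nat.mod_lt _ hq
  have hr1ne : p * k % q ≠ 0 := by
    intro h0
    have hdvd : q ∣ p * k := Nat.dvd_of_mod_eq_zero h0
    have h3 : q ∣ k := Nat.Coprime.dvd_of_dvd_mul_left (hco.symm) hdvd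
    have := Nat.le_of_dvd hk1 h3
    omega
  have hr2ne : p * (q - k) % q ≠ 0 := by
    intro h0
    have hdvd : q ∣ p * (q - k) := Nat.dvd_of_mod_eq_zero h0
    have h3 : q ∣ (q - k) := Nat.Coprime.dvd_of_dvd_mul_left (hco.symm) hdvd
    have h4 : 0 < q - k := by omega
    have := Nat.le_of_dvd h4 h3
    omega
  have h1 := Nat.div_add_mod (p * k) q
  have h2 := Nat.div_add_mod (p * (q - k)) q
  have hsum : p * k + p * (q - k) = q * p := by
    rw [← Nat.mul_add, Nat.add_sub_cancel' (le_of_lt hk2)]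
    ring
  generalize hd1 : p * k / q = d1 at h1 ⊢
  generalize hr1 : p * k % q = r1 at h1 hr1lt hr1ne
  generalize hd2 : p * (q - k) / q = d2 at h2 ⊢
  generalize hr2 : p * (q - k) % q = r2 at h2 hr2lt hr2ne
  have htot : q * (d1 + d2) + (r1 + r2) = q * p := by
    rw [Nat.mul_add]; omega
  have hmod : (r1 + r2) % q = 0 := by
    have e1 : (q * (d1 + d2) + (r1 + r2)) % q = (r1 + r2) % q :=
      Nat.mul_add_mod q (d1 + d2) (r1 + r2)
    have e2 : (q * p) % q = 0 := Nat.mul_mod_right q p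
    rw [htot, e2] at e1
    omega
  have hcq := Nat.div_add_mod (r1 + r2) q
  obtain ⟨c, hcc⟩ : ∃ c, q * c = r1 + r2 := ⟨(r1 + r2) / q, by omega⟩
  have hrq : r1 + r2 = q := by
    rcases Nat.lt_or_ge c 2 with hlt | hge
    · interval_cases c <;> omega
    · have h3' : q * 2 ≤ q * c := Nat.mul_le_mul_left q hge
      omega
  have hd : q * (d1 + d2 + 1) = q * p := by
    rw [Nat.mul_add, Nat.mul_add] at *
    omega
  have hfin := Nat.eq_of_mul_eq_mul_left hq hd
  omega

theorem stmt_5 (p q : ℕ) (hp : 1 < p) (hq : 1 < q) (h : Nat.Coprime p q) :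
    {v : ℕ | v ≤ p * q ∧ ∃ a0 a1 : ℕ, a1 < q ∧ v = a0 * q + a1 * p}.ncard =
      (p + 1) * (q + 1) / 2 := by
  have hq0 : 0 < q := by omega
  set T : Finset ((_ : ℕ) × ℕ) :=
    (Finset.range q).sigma (fun a1 => Finset.range (p * (q - a1) / q + 1)) with hT
  set f : ((_ : ℕ) × ℕ) → ℕ := fun x => x.2 * q + x.1 * p with hf
  have hbound : ∀ a0 a1 : ℕ, a1 < q →
      (a0 * q + a1 * p ≤ p * q ↔ a0 ≤ p * (q - a1) / q) := by
    intro a0 a1 ha1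
    rw [Nat.le_div_iff_mul_le hq0]
    obtain ⟨m, hm⟩ := Nat.exists_eq_add_of_lt ha1
    subst hm
    have hsub : a1 + m + 1 - a1 = m + 1 := by omega
    rw [hsub]
    constructor <;> intro hle <;> nlinarith
  have hset : {v : ℕ | v ≤ p * q ∧ ∃ a0 a1 : ℕ, a1 < q ∧ v = a0 * q + a1 * p} =
      ↑(T.image f) := by
    ext v
    simp only [Set.mem_setOf_eq, coe_image, Set.mem_image, mem_coe, Finset.mem_sigma,
      Finset.mem_range, hT, hf]
    constructor
    · rintro ⟨hv, a0, a1, ha1, rfl⟩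
      refine ⟨⟨a1, a0⟩, ⟨ha1, ?_⟩, rfl⟩
      show a0 < p * (q - a1) / q + 1
      exact Nat.lt_succ_of_le ((hbound a0 a1 ha1).1 hv)
    · rintro ⟨⟨a1, a0⟩, ⟨ha1, ha0⟩, rfl⟩
      exact ⟨(hbound a0 a1 ha1).2 (Nat.lt_succ_iff.mp ha0), a0, a1, ha1, rfl⟩
  rw [hset, Set.ncard_coe_finset]
  have hinj : Set.InjOn f ↑T := by
    rintro ⟨a1, a0⟩ ha ⟨b1, b0⟩ hb heq
    simp only [mem_coe, Finset.mem_sigma, Finset.mem_range, hT] at ha hb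
    simp only [hf] at heq
    have ha1q : a1 < q := ha.1
    have hb1q : b1 < q := hb.1
    have heq' : a0 * q + a1 * p = b0 * q + b1 * p := heq
    have hmod : a1 * p % q = b1 * p % q := by
      have h1 : (a0 * q + a1 * p) % q = a1 * p % q := by
        rw [Nat.add_comm, Nat.add_mul_mod_self_right]
      have h2 : (b0 * q + b1 * p) % q = b1 * p % q := by
        rw [Nat.add_comm, Nat.add_mul_mod_self_right]
      rw [← h1, ← h2, heq']
    have hcan : a1 ≡ b1 [MOD q] :=
      Nat.ModEq.cancel_right_of_coprime (by rw [Nat.gcd_comm]; exact h) hmod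
    have ha1b1 : a1 = b1 := by
      have h5 := hcan
      unfold Nat.ModEq at h5
      rw [Nat.mod_eq_of_lt ha1q, Nat.mod_eq_of_lt hb1q] at h5
      exact h5
    subst ha1b1
    have ha0b0 : a0 = b0 :=
      Nat.eq_of_mul_eq_mul_right hq0 (Nat.add_right_cancel heq')
    simp [ha0b0]
  rw [Finset.card_image_of_injOn hinj, hT, Finset.card_sigma]
  simp only [Finset.card_range]
  obtain ⟨n, rfl⟩ : ∃ n, q = n + 1 := ⟨q - 1, by omega⟩
  have hsplit : ∑ a1 ∈ Finset.range (n + 1), (p * (n + 1 - a1) / (n + 1) + 1) =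
      (∑ a1 ∈ Finset.range (n + 1), p * (n + 1 - a1) / (n + 1)) + (n + 1) := by
    rw [Finset.sum_add_distrib, Finset.sum_const, Finset.card_range, smul_eq_mul, mul_one]
  have hrefl : ∑ a1 ∈ Finset.range (n + 1), p * (n + 1 - a1) / (n + 1) =
      ∑ k ∈ Finset.range (n + 1), p * (k + 1) / (n + 1) := by
    rw [← Finset.sum_range_reflect (fun k => p * (k + 1) / (n + 1)) (n + 1)]
    refine Finset.sum_congr rfl fun a1 ha1 => ?_
    simp only [Finset.mem_range] at ha1
    have e : n + 1 - 1 - a1 + 1 = n + 1 - a1 := by omega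
    rw [e]
  have hlastsplit : ∑ k ∈ Finset.range (n + 1), p * (k + 1) / (n + 1) =
      (∑ k ∈ Finset.range n, p * (k + 1) / (n + 1)) + p := by
    rw [Finset.sum_range_succ, Nat.mul_div_cancel p hq0]
  set A := ∑ k ∈ Finset.range n, p * (k + 1) / (n + 1) with hA
  have hrefl2 : ∑ j ∈ Finset.range n, p * (n - j) / (n + 1) = A := by
    rw [hA, ← Finset.sum_range_reflect (fun k => p * (k + 1) / (n + 1)) n]
    refine Finset.sum_congr rfl fun j hj => ?_
    simp only [Finset.mem_range] at hj
    have e : n - 1 - j + 1 = n - j := by omega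
    rw [e]
  have h2A : 2 * A = n * (p - 1) := by
    have e1 : 2 * A = ∑ j ∈ Finset.range n,
        (p * (j + 1) / (n + 1) + p * (n - j) / (n + 1)) := by
      rw [Finset.sum_add_distrib, hrefl2, hA]; ring
    have e2 : ∀ j ∈ Finset.range n,
        p * (j + 1) / (n + 1) + p * (n - j) / (n + 1) = p - 1 := by
      intro j hj
      simp only [Finset.mem_range] at hj
      have e : n - j = (n + 1) - (j + 1) := by omega
      rw [e]
      exact pair_div p (n + 1) (j + 1) hq0 h (by omega) (by omega)
    rw [e1, Finset.sum_congr rfl e2, Finset.sum_const, Finset.card_range, smul_eq_mul]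
  rw [hsplit, hrefl, hlastsplit]
  have key : (p + 1) * (n + 1 + 1) = n * (p - 1) + 2 * p + 2 * n + 2 := by
    cases p with
    | zero => omega
    | succ p' => simp only [Nat.add_sub_cancel]; ring
  generalize hN : n * (p - 1) = N at h2A key
  generalize hM : (p + 1) * (n + 1 + 1) = M at key ⊢
  omega
end

section
/- Let (p_k, q_k), k = 1, ..., n, be pairs of coprime integers with p_k, q_k > 1. Define the semigroups H_k = N*q_1*...*q_k + N*p_1*q_2*...*q_k + N*p_2*q_3*...*q_k + ... + N*p_{k-1}*q_k + N*p_k. Define m_1 = p_1*q_1 and m_k = q_k*m_{k-1} + p_k*(q_k - 1). If every integer a > m_{k-1} lies in H_{k-1}, then every integer a > m_k lies in H_k. -/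
/-!
Given `a > m_k = q_k m_{k-1} + p_k (q_k - 1)`, the number `a - q_k (m_{k-1} + 1)` is at least
`(p_k - 1)(q_k - 1)`, so by the two-coin Frobenius bound it lies in `ℕ p_k + ℕ q_k`. Hence
`a = q_k b + c p_k` with `b > m_{k-1}`, so `b ∈ H_{k-1}`, and `q_k H_{k-1} ⊆ H_k`, `p_k ∈ H_k`.
-/

/-- The generators of the semigroup `H_k` of the paper:
`q_1⋯q_k` together with `p_i * q_{i+1}⋯q_k` for `1 ≤ i ≤ k`. -/
def gensH (p q : ℕ → ℕ) (k : ℕ) : Set ℕ :=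
  {∏ i ∈ Finset.Icc 1 k, q i} ∪
    {x | ∃ i ∈ Finset.Icc 1 k, x = p i * ∏ j ∈ Finset.Icc (i + 1) k, q j}

theorem Nat.exists_eq_mul_add_mul_of_coprime {p q m a : ℕ} (hpq : p.Coprime q)
    (ha : q * m + p * (q - 1) < a) : ∃ b c, m < b ∧ a = q * b + c * p := by
  have hbound : q * (m + 1) ≤ a ∧ p.pred * q.pred ≤ a - q * (m + 1) := by
    rcases p with _ | p
    · obtain rfl : q = 1 := by simpa using hpq
      simp only [Nat.pred_zero, zero_mul] at ha ⊢
      omega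
    rcases q with _ | q
    · simp only [Nat.pred_zero, mul_zero, zero_mul] at ha ⊢
      omega
    simp only [Nat.pred_succ, Nat.add_sub_cancel] at ha ⊢
    ring_nf at ha ⊢
    omega
  obtain ⟨c, b, hcb⟩ := Nat.exists_add_mul_eq_of_gcd_dvd_of_mul_pred_le p q _
    (by simp [hpq.gcd_eq_one]) hbound.2
  refine ⟨m + 1 + b, c, by omega, ?_⟩
  zify [hbound.1] at hcb ⊢
  linarith

section gensH

variable {p q : ℕ → ℕ} {k : ℕ}

theorem p_succ_mem_gensH_succ : p (k + 1) ∈ gensH p q (k + 1) :=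
  Or.inr ⟨k + 1, by simp, by simp⟩

theorem q_succ_mul_mem_gensH_succ {x : ℕ} (hx : x ∈ gensH p q k) :
    q (k + 1) * x ∈ gensH p q (k + 1) := by
  rcases hx with rfl | ⟨i, hi, rfl⟩
  · left
    rw [Set.mem_singleton_iff, Finset.prod_Icc_succ_top (by omega), mul_comm]
  · right
    rw [Finset.mem_Icc] at hi
    refine ⟨i, Finset.mem_Icc.2 ⟨hi.1, by omega⟩, ?_⟩
    rw [Finset.prod_Icc_succ_top (by omega)]
    ring

theorem q_succ_mul_mem_closure_gensH_succ {x : ℕ}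
    (hx : x ∈ AddSubmonoid.closure (gensH p q k)) :
    q (k + 1) * x ∈ AddSubmonoid.closure (gensH p q (k + 1)) :=
  (AddSubmonoid.closure_le (S := (AddSubmonoid.closure (gensH p q (k + 1))).comap
    (AddMonoidHom.mulLeft (q (k + 1))))).2
    (fun _ hy => AddSubmonoid.subset_closure (q_succ_mul_mem_gensH_succ hy)) hx

end gensH

theorem stmt_7_general (p q : ℕ → ℕ)
    (hcop : ∀ i, Nat.Coprime (p i) (q i)) (k : ℕ) (hk : 2 ≤ k)
    (m : ℕ → ℕ)
    (hm : ∀ j, 2 ≤ j → m j = q j * m (j - 1) + p j * (q j - 1))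
    (ih : ∀ a : ℕ, m (k - 1) < a → a ∈ AddSubmonoid.closure (gensH p q (k - 1))) :
    ∀ a : ℕ, m k < a → a ∈ AddSubmonoid.closure (gensH p q k) := by
  obtain ⟨j, rfl⟩ : ∃ j, k = j + 1 := ⟨k - 1, by omega⟩
  intro a ha
  rw [hm (j + 1) hk, Nat.add_sub_cancel] at ha
  rw [Nat.add_sub_cancel] at ih
  obtain ⟨b, c, hb, rfl⟩ := Nat.exists_eq_mul_add_mul_of_coprime (hcop (j + 1)) ha
  exact add_mem (q_succ_mul_mem_closure_gensH_succ (ih b hb))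
    (by simpa using nsmul_mem (AddSubmonoid.subset_closure p_succ_mem_gensH_succ) c)

theorem stmt_7 (p q : ℕ → ℕ) (hp : ∀ i, 1 < p i) (hq : ∀ i, 1 < q i)
    (hcop : ∀ i, Nat.Coprime (p i) (q i)) (k : ℕ) (hk : 2 ≤ k)
    (m : ℕ → ℕ) (hm1 : m 1 = p 1 * q 1)
    (hm : ∀ j, 2 ≤ j → m j = q j * m (j - 1) + p j * (q j - 1))
    (ih : ∀ a : ℕ, m (k - 1) < a → a ∈ AddSubmonoid.closure (gensH p q (k - 1))) :
    ∀ a : ℕ, m k < a → a ∈ AddSubmonoid.closure (gensH p q k) :=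
  stmt_7_general p q hcop k hk m hm ih
end

section
/- Let k ≥ 1 and let p_1, ..., p_k, q_1, ..., q_k be integers > 1 with gcd(p_j, q_j) = 1 for all j, and let H_k = N*q_1*...*q_k + N*p_1*q_2*...*q_k + ... + N*p_{k-1}*q_k + N*p_k, where the Abhyankar–Moh condition p_j ∈ H_{j-1} holds for all j. Then every element a of H_k has a unique representation a = a_0*q_1*...*q_k + Σ_{i=1}^{k-1} a_i*p_i*q_{i+1}*...*q_k + a_k*p_k with nonnegative integers a_i satisfying a_i < q_i for i = 1, ..., k. -/
namespace AMaux

def val (p q : ℕ → ℕ) (k : ℕ) (c : ℕ → ℕ) : ℕ :=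
  c 0 * ∏ j ∈ Finset.Icc 1 k, q j +
    ∑ i ∈ Finset.Icc 1 k, c i * (p i * ∏ j ∈ Finset.Icc (i + 1) k, q j)

lemma val_congr (p q : ℕ → ℕ) (k : ℕ) {c c' : ℕ → ℕ}
    (h : ∀ i, i ≤ k → c i = c' i) : val p q k c = val p q k c' := by
  unfold val
  rw [h 0 (Nat.zero_le _)]
  congr 1
  refine Finset.sum_congr rfl fun i hi => ?_
  rw [h i (Finset.mem_Icc.mp hi).2]

lemma val_update (p q : ℕ → ℕ) (k : ℕ) (c : ℕ → ℕ) (x : ℕ) :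
    val p q k (Function.update c (k + 1) x) = val p q k c := by
  refine val_congr p q k fun i hi => ?_
  exact Function.update_of_ne (by omega) _ _

lemma val_succ (p q : ℕ → ℕ) (k : ℕ) (c : ℕ → ℕ) :
    val p q (k + 1) c = q (k + 1) * val p q k c + c (k + 1) * p (k + 1) := by
  unfold val
  rw [Finset.sum_Icc_succ_top (by omega : 1 ≤ k + 1),
      Finset.prod_Icc_succ_top (by omega : 1 ≤ k + 1)]
  have h1 : ∏ j ∈ Finset.Icc (k + 1 + 1) (k + 1), q j = 1 := by
    rw [Finset.Icc_eq_empty (by omega), Finset.prod_empty]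
  have h2 : ∑ i ∈ Finset.Icc 1 k, c i * (p i * ∏ j ∈ Finset.Icc (i + 1) (k + 1), q j)
      = ∑ i ∈ Finset.Icc 1 k, q (k + 1) * (c i * (p i * ∏ j ∈ Finset.Icc (i + 1) k, q j)) := by
    refine Finset.sum_congr rfl fun i hi => ?_
    have hik : i + 1 ≤ k + 1 := by
      have := (Finset.mem_Icc.mp hi).2; omega
    rw [Finset.prod_Icc_succ_top hik]; ring
  rw [h1, h2, ← Finset.mul_sum]; ring

lemma closure_zero_top (p q : ℕ → ℕ) (a : ℕ) :
    a ∈ AddSubmonoid.closure (gensH p q 0) := by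
  have h1 : (1 : ℕ) ∈ gensH p q 0 := by
    unfold gensH; exact Set.mem_union_left _ (by simp)
  have : a = a • (1 : ℕ) := by simp
  rw [this]
  exact nsmul_mem (AddSubmonoid.subset_closure h1) a

lemma decomp (p q : ℕ → ℕ) (k : ℕ) (a : ℕ)
    (ha : a ∈ AddSubmonoid.closure (gensH p q (k + 1))) :
    ∃ b m, b ∈ AddSubmonoid.closure (gensH p q k) ∧ a = q (k + 1) * b + m * p (k + 1) := by
  induction ha using AddSubmonoid.closure_induction with
  | mem x hx =>
    rcases hx with hx | ⟨i, hi, hx⟩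
    · refine ⟨∏ j ∈ Finset.Icc 1 k, q j, 0, AddSubmonoid.subset_closure (Or.inl rfl), ?_⟩
      rw [Set.mem_singleton_iff.mp hx, Finset.prod_Icc_succ_top (by omega : 1 ≤ k + 1)]
      ring
    · rcases Finset.mem_Icc.mp hi with ⟨hi1, hi2⟩
      rcases Nat.eq_or_lt_of_le hi2 with h | h
      · refine ⟨0, 1, AddSubmonoid.zero_mem _, ?_⟩
        subst h
        rw [hx, Finset.Icc_eq_empty (by omega), Finset.prod_empty]
        ring
      · have hik : i ≤ k := by omega
        refine ⟨p i * ∏ j ∈ Finset.Icc (i + 1) k, q j, 0,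
          AddSubmonoid.subset_closure (Or.inr ⟨i, Finset.mem_Icc.mpr ⟨hi1, hik⟩, rfl⟩), ?_⟩
        rw [hx, Finset.prod_Icc_succ_top (by omega : i + 1 ≤ k + 1)]
        ring
  | zero => exact ⟨0, 0, AddSubmonoid.zero_mem _, by ring⟩
  | add x y _ _ ihx ihy =>
    obtain ⟨b1, m1, hb1, he1⟩ := ihx
    obtain ⟨b2, m2, hb2, he2⟩ := ihy
    exact ⟨b1 + b2, m1 + m2, AddSubmonoid.add_mem _ hb1 hb2, by rw [he1, he2]; ring⟩

lemma exists_rep (p q : ℕ → ℕ) (hq : ∀ i, 1 < q i) :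
    ∀ k, (∀ j, 2 ≤ j → j ≤ k → p j ∈ AddSubmonoid.closure (gensH p q (j - 1))) →
    ∀ a, a ∈ AddSubmonoid.closure (gensH p q k) →
    ∃ c : ℕ → ℕ, (∀ i, k < i → c i = 0) ∧ (∀ i, 1 ≤ i → i ≤ k → c i < q i) ∧
      a = val p q k c := by
  intro k
  induction k with
  | zero =>
    intro _ a _
    refine ⟨fun i => if i = 0 then a else 0, ?_, ?_, ?_⟩
    · intro i hi; simp only [if_neg (by omega : ¬ i = 0)]
    · intro i h1 h2; omega
    · simp [val]
  | succ k ih =>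
    intro hAM a ha
    obtain ⟨b, m, hb, he⟩ := decomp p q k a ha
    have hpk : p (k + 1) ∈ AddSubmonoid.closure (gensH p q k) := by
      rcases Nat.eq_zero_or_pos k with hk | hk
      · subst hk; exact closure_zero_top p q _
      · have := hAM (k + 1) (by omega) le_rfl
        simpa using this
    set s := m / q (k + 1) with hs
    set r := m % q (k + 1) with hr
    have hb' : b + s * p (k + 1) ∈ AddSubmonoid.closure (gensH p q k) := by
      refine AddSubmonoid.add_mem _ hb ?_
      have : s * p (k + 1) = s • p (k + 1) := by simp
      rw [this]
      exact nsmul_mem hpk s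
    obtain ⟨c, hc0, hclt, hcv⟩ := ih (fun j h1 h2 => hAM j h1 (by omega)) _ hb'
    refine ⟨Function.update c (k + 1) r, ?_, ?_, ?_⟩
    · intro i hi
      rcases eq_or_ne i (k + 1) with h | h
      · omega
      · rw [Function.update_of_ne h]; exact hc0 i (by omega)
    · intro i h1 h2
      rcases eq_or_ne i (k + 1) with h | h
      · rw [h, Function.update_self]
        exact Nat.mod_lt _ (by have := hq (k + 1); omega)
      · rw [Function.update_of_ne h]; exact hclt i h1 (by omega)
    · rw [val_succ, Function.update_self, val_update, ← hcv, he]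
      have : m = q (k + 1) * s + r := (Nat.div_add_mod m (q (k + 1))).symm
      rw [this]; ring

lemma unique_rep (p q : ℕ → ℕ) (hq : ∀ i, 1 < q i) (hcop : ∀ i, Nat.Coprime (p i) (q i)) :
    ∀ k (c c' : ℕ → ℕ), (∀ i, k < i → c i = 0) → (∀ i, 1 ≤ i → i ≤ k → c i < q i) →
    (∀ i, k < i → c' i = 0) → (∀ i, 1 ≤ i → i ≤ k → c' i < q i) →
    val p q k c = val p q k c' → c = c' := by
  intro k
  induction k with
  | zero =>
    intro c c' hc0 _ hc0' _ hv
    simp only [val, Finset.Icc_eq_empty (by omega : ¬ (1:ℕ) ≤ 0), Finset.prod_empty,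
      Finset.sum_empty, mul_one, add_zero] at hv
    funext i
    rcases Nat.eq_zero_or_pos i with h | h
    · rw [h]; exact hv
    · rw [hc0 i h, hc0' i h]
  | succ k ih =>
    intro c c' hc0 hclt hc0' hclt' hv
    rw [val_succ, val_succ] at hv
    have hmod : c (k + 1) * p (k + 1) ≡ c' (k + 1) * p (k + 1) [MOD q (k + 1)] := by
      have h1 : (q (k + 1) * val p q k c + c (k + 1) * p (k + 1)) % q (k + 1)
          = c (k + 1) * p (k + 1) % q (k + 1) := by
        rw [add_comm, Nat.add_mul_mod_self_left]
      have h2 : (q (k + 1) * val p q k c' + c' (k + 1) * p (k + 1)) % q (k + 1)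
          = c' (k + 1) * p (k + 1) % q (k + 1) := by
        rw [add_comm, Nat.add_mul_mod_self_left]
      unfold Nat.ModEq
      rw [← h1, ← h2, hv]
    have hck : c (k + 1) = c' (k + 1) := by
      have := (Nat.ModEq.cancel_right_of_coprime (by
        have := hcop (k + 1); rwa [Nat.Coprime, Nat.gcd_comm] at this) hmod)
      have hlt := hclt (k + 1) (by omega) le_rfl
      have hlt' := hclt' (k + 1) (by omega) le_rfl
      rwa [Nat.ModEq, Nat.mod_eq_of_lt hlt, Nat.mod_eq_of_lt hlt'] at this
    have hval : val p q k c = val p q k c' := by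
      rw [hck] at hv
      have := Nat.add_right_cancel hv
      exact Nat.eq_of_mul_eq_mul_left (by have := hq (k + 1); omega) this
    have hval' : val p q k c = val p q k c' := hval
    have heq : Function.update c (k + 1) 0 = Function.update c' (k + 1) 0 := by
      refine ih _ _ ?_ ?_ ?_ ?_ ?_
      · intro i hi
        rcases eq_or_ne i (k + 1) with h | h
        · rw [h, Function.update_self]
        · rw [Function.update_of_ne h]; exact hc0 i (by omega)
      · intro i h1 h2; rw [Function.update_of_ne (by omega)]; exact hclt i h1 (by omega)
      · intro i hi
        rcases eq_or_ne i (k + 1) with h | h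
        · rw [h, Function.update_self]
        · rw [Function.update_of_ne h]; exact hc0' i (by omega)
      · intro i h1 h2; rw [Function.update_of_ne (by omega)]; exact hclt' i h1 (by omega)
      · rw [val_update, val_update]; exact hval
    funext i
    rcases eq_or_ne i (k + 1) with h | h
    · rw [h]; exact hck
    · have := congrFun heq i
      rwa [Function.update_of_ne h, Function.update_of_ne h] at this

end AMaux

theorem stmt_15 (p q : ℕ → ℕ) (hp : ∀ i, 1 < p i) (hq : ∀ i, 1 < q i)
    (hcop : ∀ i, Nat.Coprime (p i) (q i)) (k : ℕ)
    (hAM : ∀ j, 2 ≤ j → j ≤ k → p j ∈ AddSubmonoid.closure (gensH p q (j - 1)))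
    (a : ℕ) (ha : a ∈ AddSubmonoid.closure (gensH p q k)) :
    ∃! c : ℕ → ℕ,
      (∀ i, k < i → c i = 0) ∧ (∀ i, 1 ≤ i → i ≤ k → c i < q i) ∧
      a = c 0 * ∏ j ∈ Finset.Icc 1 k, q j +
        ∑ i ∈ Finset.Icc 1 k, c i * (p i * ∏ j ∈ Finset.Icc (i + 1) k, q j) := by
  obtain ⟨c, hc0, hclt, hcv⟩ := AMaux.exists_rep p q hq k hAM a ha
  refine ⟨c, ⟨hc0, hclt, hcv⟩, ?_⟩
  rintro c' ⟨hc0', hclt', hcv'⟩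
  exact AMaux.unique_rep p q hq hcop k c' c hc0' hclt' hc0 hclt (hcv'.symm.trans hcv)
end

section
/- In the braid group B_3 = ⟨σ_1, σ_2 | σ_1σ_2σ_1 = σ_2σ_1σ_2⟩, the elements γ_1 = σ_2^{-2}σ_1σ_2^2 and γ_2 = σ_1^2σ_2σ_1^{-2} do not commute; in particular the subgroup they generate is non-abelian. -/
/-- The braid relation for the braid group `B₃ = ⟨σ₁, σ₂ ∣ σ₁σ₂σ₁ = σ₂σ₁σ₂⟩`. -/
def braidRel : Set (FreeGroup (Fin 2)) :=
  {FreeGroup.of 0 * FreeGroup.of 1 * FreeGroup.of 0 *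
    (FreeGroup.of 1 * FreeGroup.of 0 * FreeGroup.of 1)⁻¹}

/-- Map `σ₀ ↦ (0 1)`, `σ₁ ↦ (1 2)` into `S₃`. -/
def braidToPerm : Fin 2 → Equiv.Perm (Fin 3) :=
  fun i => if i = 0 then Equiv.swap 0 1 else Equiv.swap 1 2

lemma braidToPerm_rel : ∀ r ∈ braidRel, FreeGroup.lift braidToPerm r = 1 := by
  intro r hr
  rw [braidRel, Set.mem_singleton_iff] at hr
  subst hr
  simp only [map_mul, map_inv, FreeGroup.lift_apply_of, braidToPerm]
  decide

/-- The induced homomorphism `B₃ → S₃`. -/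
def braidHom : PresentedGroup braidRel →* Equiv.Perm (Fin 3) :=
  PresentedGroup.toGroup braidToPerm_rel

/-- In `B₃`, the elements `γ₁ = σ₂⁻²σ₁σ₂²` and `γ₂ = σ₁²σ₂σ₁⁻²` do not commute. -/
theorem stmt_18 :
    let σ : Fin 2 → PresentedGroup braidRel := fun i => PresentedGroup.of i
    let γ₁ := (σ 1)⁻¹ ^ 2 * σ 0 * (σ 1) ^ 2
    let γ₂ := (σ 0) ^ 2 * σ 1 * ((σ 0)⁻¹) ^ 2
    γ₁ * γ₂ ≠ γ₂ * γ₁ := by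
  intro σ γ₁ γ₂ h
  have := congrArg braidHom h
  simp only [γ₁, γ₂, σ, map_mul, map_pow, map_inv,
    braidHom, PresentedGroup.toGroup.of, braidToPerm] at this
  revert this
  decide
end

section
/- Let (p_k, q_k) for k = 1, ..., n satisfy p_k, q_k > 1, gcd(p_k, q_k) = 1, Δ_k = p_k - p_{k-1}*q_{k-1}*q_k < 0 for k ≥ 2, Δ_1 = p_1 - q_1 < 0, and the Abhyankar–Moh semigroup condition p_{k+1} ∈ N*q_1*...*q_k + N*p_1*q_2*...*q_k + ... + N*p_{k-1}*q_k + N*p_k. Then the genus g defined by 1 - 2g = q_1*...*q_n + Σ_{i=1}^{n-1} p_i*(1-q_i)*q_{i+1}*...*q_n + p_n*(1-q_n) is a nonnegative integer. -/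
namespace Nat.Coprime

variable {a b : ℕ}

theorem even_intCast_sub_one_mul_sub_one (h : a.Coprime b) :
    Even (((a : ℤ) - 1) * ((b : ℤ) - 1)) := by
  rw [Int.even_mul, Int.even_sub_one, Int.even_sub_one, ← not_and_or, Int.even_coe_nat,
    Int.even_coe_nat]
  rintro ⟨ha, hb⟩
  have h2 : 2 ∣ Nat.gcd a b := Nat.dvd_gcd ha.two_dvd hb.two_dvd
  rw [h] at h2
  omega

theorem intCast_sub_one_mul_sub_one_nonneg (h : a.Coprime b) :
    0 ≤ ((a : ℤ) - 1) * ((b : ℤ) - 1) := by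
  rcases Nat.eq_zero_or_pos a with rfl | ha
  · simp [(Nat.coprime_zero_left b).mp h]
  rcases Nat.eq_zero_or_pos b with rfl | hb
  · simp [(Nat.coprime_zero_right a).mp h]
  have ha' : (1 : ℤ) ≤ a := by exact_mod_cast ha
  have hb' : (1 : ℤ) ≤ b := by exact_mod_cast hb
  exact mul_nonneg (by linarith) (by linarith)

theorem exists_sub_one_mul_sub_one_eq_two_mul (h : a.Coprime b) :
    ∃ c : ℕ, ((a : ℤ) - 1) * ((b : ℤ) - 1) = 2 * c := by
  obtain ⟨m, hm⟩ := h.even_intCast_sub_one_mul_sub_one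
  lift m to ℕ using by linarith [h.intCast_sub_one_mul_sub_one_nonneg]
  exact ⟨m, by rw [hm]; ring⟩

end Nat.Coprime

def oneSubTwoGenus (p q : ℕ → ℕ) (n : ℕ) : ℤ :=
  (∏ i ∈ Finset.Icc 1 n, (q i : ℤ)) +
    ∑ i ∈ Finset.Icc 1 n, (p i : ℤ) * (1 - (q i : ℤ)) * ∏ j ∈ Finset.Icc (i + 1) n, (q j : ℤ)

theorem oneSubTwoGenus_succ (p q : ℕ → ℕ) (n : ℕ) :
    oneSubTwoGenus p q (n + 1) =
      q (n + 1) * oneSubTwoGenus p q n + p (n + 1) * (1 - (q (n + 1) : ℤ)) := by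
  have hsum : ∀ i ∈ Finset.Icc 1 n,
      (p i : ℤ) * (1 - (q i : ℤ)) * ∏ j ∈ Finset.Icc (i + 1) (n + 1), (q j : ℤ) =
        q (n + 1) * ((p i : ℤ) * (1 - (q i : ℤ)) * ∏ j ∈ Finset.Icc (i + 1) n, (q j : ℤ)) := by
    intro i hi
    rw [Finset.prod_Icc_succ_top (by grind)]
    ring
  simp only [oneSubTwoGenus]
  rw [Finset.prod_Icc_succ_top (by omega), Finset.sum_Icc_succ_top (by omega),
    Finset.sum_congr rfl hsum, ← Finset.mul_sum,
    Finset.Icc_eq_empty_of_lt (Nat.lt_succ_self (n + 1)), Finset.prod_empty]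
  ring

theorem exists_nat_oneSubTwoGenus_eq (p q : ℕ → ℕ) (hcop : ∀ i, Nat.Coprime (p i) (q i))
    (n : ℕ) : ∃ g : ℕ, 1 - 2 * (g : ℤ) = oneSubTwoGenus p q n := by
  induction n with
  | zero => exact ⟨0, by simp [oneSubTwoGenus]⟩
  | succ n ih =>
    obtain ⟨g, hg⟩ := ih
    obtain ⟨c, hc⟩ := (hcop (n + 1)).exists_sub_one_mul_sub_one_eq_two_mul
    refine ⟨q (n + 1) * g + c, ?_⟩
    rw [oneSubTwoGenus_succ, ← hg]
    push_cast
    linear_combination hc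

theorem stmt_19_general (n : ℕ) (p q : ℕ → ℕ)
    (hcop : ∀ i, Nat.Coprime (p i) (q i)) :
    ∃ g : ℕ, 1 - 2 * (g : ℤ) =
      (∏ i ∈ Finset.Icc 1 n, (q i : ℤ)) +
        ∑ i ∈ Finset.Icc 1 n,
          (p i : ℤ) * (1 - (q i : ℤ)) * ∏ j ∈ Finset.Icc (i + 1) n, (q j : ℤ) :=
  exists_nat_oneSubTwoGenus_eq p q hcop n

/-- The genus defined by the splice-diagram formula
`1 - 2g = q₁⋯qₙ + ∑ pᵢ(1-qᵢ)q_{i+1}⋯qₙ` is a nonnegative integer. -/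
theorem stmt_19 (n : ℕ) (hn : 1 ≤ n) (p q : ℕ → ℕ)
    (hp : ∀ i, 1 < p i) (hq : ∀ i, 1 < q i)
    (hcop : ∀ i, Nat.Coprime (p i) (q i))
    (hΔ1 : p 1 < q 1)
    (hΔ : ∀ k, 2 ≤ k → k ≤ n → (p k : ℤ) < (p (k - 1) : ℤ) * q (k - 1) * q k)
    (hAM : ∀ k, 1 ≤ k → k ≤ n - 1 → p (k + 1) ∈ AddSubmonoid.closure (gensH p q k)) :
    ∃ g : ℕ, 1 - 2 * (g : ℤ) =
      (∏ i ∈ Finset.Icc 1 n, (q i : ℤ)) +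
        ∑ i ∈ Finset.Icc 1 n,
          (p i : ℤ) * (1 - (q i : ℤ)) * ∏ j ∈ Finset.Icc (i + 1) n, (q j : ℤ) :=
  stmt_19_general n p q hcop
end
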